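/- arXiv:2003.10529 — 2 statements merged into one kernel-verified Lean document; each statement's English description precedes it below -/
import Mathlib

section
/- Let f, g : 2^E → ℤ be submodular, monotone, and nonnegative set functions on a finite set E. Then the matroid M(f+g) induced by the sum f+g (via Edmonds' construction, where I is independent iff |I'| ≤ f(I')+g(I') for all nonempty I' ⊆ I) equals the matroid union M(f) ∨ M(g), i.e., a set I is independent in M(f+g) if and only if I = I₁ ∪ I₂ with I₁ independent in M(f) and I₂ independent in M(g). -/
/-- Edmonds' independence condition for a set function `f`: `I` is independent
iff `|I'| ≤ f I'` for every nonempty `I' ⊆ I`. -/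
def EdmondsIndep {α : Type*} (f : Finset α → ℤ) (I : Finset α) : Prop :=
  ∀ I' ⊆ I, I'.Nonempty → (I'.card : ℤ) ≤ f I'

/-!
Only the values on nonempty sets matter, so we may take `f ∅ = g ∅ = 0`. Then
`r_f S = min_{T ⊆ S} (f T + |S \ T|)` is the rank function of `M(f)`, and independence of `I`
for `f + g` gives `|S| ≤ r_f S + r_g S` for all `S ⊆ I`. The matroid partition theorem splits
such an `I` into an `r_f`-independent and an `r_g`-independent part, by induction on `I`: an
element `x ∈ I` can always be contracted into one of the two rank functions, because if both
choices failed, the two obstructing sets `S` and `U` would combine by submodularity into the set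
`S ∪ U ∪ {x}`, which violates `|A| ≤ r_f A + r_g A`.
-/

open Finset

section EdmondsUnion

variable {α : Type*}

lemma edmondsIndep_congr {f g : Finset α → ℤ} {I : Finset α}
    (h : ∀ S : Finset α, S.Nonempty → f S = g S) : EdmondsIndep f I ↔ EdmondsIndep g I :=
  forall₂_congr fun S _ => imp_congr_right fun hS => by rw [h S hS]

/-- For a matroid rank function `r` this says `r I = #I`. -/
def RankIndep (r : Finset α → ℤ) (I : Finset α) : Prop :=
  ∀ S ⊆ I, (#S : ℤ) ≤ r S

lemma EdmondsIndep.rankIndep {f : Finset α → ℤ} {I : Finset α} (h : EdmondsIndep f I)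
    (hf0 : 0 ≤ f ∅) : RankIndep f I := by
  intro S hS
  rcases S.eq_empty_or_nonempty with rfl | hne
  · simpa using hf0
  · exact h S hS hne

lemma rankIndep_singleton_iff {r : Finset α → ℤ} (h0 : r ∅ = 0) {x : α} :
    RankIndep r {x} ↔ 0 < r {x} := by
  simp [RankIndep, subset_singleton_iff, or_imp, forall_and, h0, Order.one_le_iff_pos]

variable [DecidableEq α]

def IsSubmodular (f : Finset α → ℤ) : Prop :=
  ∀ S T, f (S ∪ T) + f (S ∩ T) ≤ f S + f T

lemma IsSubmodular.sub_le_sub_of_subset {r : Finset α → ℤ} (hr : IsSubmodular r)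
    {S W : Finset α} {x : α} (hSW : S ⊆ W) (hx : x ∉ W) :
    r (insert x W) - r W ≤ r (insert x S) - r S := by
  have h := hr (insert x S) W
  rw [insert_union, union_eq_right.2 hSW, insert_inter_of_notMem hx,
    inter_eq_left.2 hSW] at h
  linarith

section Normalization

variable {f : Finset α → ℤ}

lemma IsSubmodular.update_empty (hf : IsSubmodular f) (hf0 : 0 ≤ f ∅) :
    IsSubmodular (Function.update f ∅ 0) := by
  intro S T
  rcases eq_or_ne S ∅ with rfl | hS
  · simp
  rcases eq_or_ne T ∅ with rfl | hT
  · simp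
  have hST : S ∪ T ≠ ∅ := fun h => hS (subset_empty.1 (h ▸ subset_union_left))
  rw [Function.update_of_ne hS, Function.update_of_ne hT, Function.update_of_ne hST]
  rcases eq_or_ne (S ∩ T) ∅ with h | h
  · have := hf S T
    rw [h] at this ⊢
    rw [Function.update_self]
    linarith
  · rw [Function.update_of_ne h]
    exact hf S T

lemma monotone_update_empty (hf : Monotone f) (hf0 : 0 ≤ f) :
    Monotone (Function.update f ∅ 0) := by
  intro S T hST
  rcases eq_or_ne T ∅ with rfl | hT
  · rw [subset_empty.1 hST]
  rw [Function.update_of_ne hT]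
  rcases eq_or_ne S ∅ with rfl | hS
  · rw [Function.update_self]
    exact hf0 T
  · rw [Function.update_of_ne hS]
    exact hf hST

lemma edmondsIndep_update_empty {I : Finset α} (c : ℤ) :
    EdmondsIndep (Function.update f ∅ c) I ↔ EdmondsIndep f I :=
  edmondsIndep_congr fun _ hS => Function.update_of_ne hS.ne_empty _ _

end Normalization

section EdmondsIndep

variable {f g : Finset α → ℤ}

lemma EdmondsIndep.card_inter_le {I : Finset α} (hI : EdmondsIndep f I) (hf : Monotone f)
    (hf0 : 0 ≤ f) (S : Finset α) : (#(S ∩ I) : ℤ) ≤ f S := by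
  rcases (S ∩ I).eq_empty_or_nonempty with h | h
  · simpa [h] using hf0 S
  · exact (hI _ inter_subset_right h).trans (hf inter_subset_left)

lemma EdmondsIndep.add_union {I₁ I₂ : Finset α} (h₁ : EdmondsIndep f I₁)
    (h₂ : EdmondsIndep g I₂) (hf : Monotone f) (hf0 : 0 ≤ f) (hg : Monotone g) (hg0 : 0 ≤ g) :
    EdmondsIndep (f + g) (I₁ ∪ I₂) := by
  intro S hS _
  have hcard : #S ≤ #(S ∩ I₁) + #(S ∩ I₂) :=
    calc #S = #(S ∩ I₁ ∪ S ∩ I₂) := by rw [← inter_union_distrib_left, inter_eq_left.2 hS]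
      _ ≤ #(S ∩ I₁) + #(S ∩ I₂) := card_union_le _ _
  calc (#S : ℤ) ≤ #(S ∩ I₁) + #(S ∩ I₂) := by exact_mod_cast hcard
    _ ≤ f S + g S := add_le_add (h₁.card_inter_le hf hf0 S) (h₂.card_inter_le hg hg0 S)

end EdmondsIndep

structure IsMatroidRankFn (r : Finset α → ℤ) : Prop where
  empty : r ∅ = 0
  mono : Monotone r
  submod : IsSubmodular r
  insert_le : ∀ x S, r (insert x S) ≤ r S + 1

def contractRank (r : Finset α → ℤ) (C : Finset α) (S : Finset α) : ℤ :=
  r (S ∪ C) - r C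

lemma IsMatroidRankFn.contract {r : Finset α → ℤ} (h : IsMatroidRankFn r) (C : Finset α) :
    IsMatroidRankFn (contractRank r C) where
  empty := by simp [contractRank]
  mono _ _ hST := sub_le_sub_right (h.mono (union_subset_union_left hST)) _
  submod S T := by
    have := h.submod (S ∪ C) (T ∪ C)
    rw [← union_union_distrib_right, ← inter_union_distrib_right] at this
    simp only [contractRank]
    linarith
  insert_le x S := by
    have := h.insert_le x (S ∪ C)
    rw [← insert_union] at this
    simp only [contractRank]
    linarith

lemma RankIndep.union_of_contractRank {r : Finset α → ℤ} {S C : Finset α}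
    (hS : RankIndep (contractRank r C) S) (hr : IsSubmodular r) (hC : RankIndep r C) :
    RankIndep r (S ∪ C) := by
  intro A hA
  have hAC : A \ C ⊆ S := fun a ha => by
    have := hA (mem_sdiff.1 ha).1
    simp_all
  have h₁ := hS _ hAC
  rw [contractRank, sdiff_union_self_eq_union] at h₁
  have h₂ := hC _ (inter_subset_right : A ∩ C ⊆ C)
  have hcard : (#A : ℤ) = #(A \ C) + #(A ∩ C) := by
    exact_mod_cast (card_sdiff_add_card_inter A C).symm
  linarith [hr A C]

section Partition

variable {r₁ r₂ : Finset α → ℤ}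

/-- Either contracting `x` in `r₁` or contracting it in `r₂` preserves the partition condition
on `J`. -/
lemma RankIndep.forall_card_lt_or_forall_card_lt {x : α} {J : Finset α}
    (hI : RankIndep (r₁ + r₂) (insert x J)) (hx : x ∉ J) (hm₁ : Monotone r₁)
    (hs₁ : IsSubmodular r₁) (hm₂ : Monotone r₂) (hs₂ : IsSubmodular r₂) :
    (∀ S ⊆ J, (#S : ℤ) < r₁ (insert x S) + r₂ S) ∨
      (∀ S ⊆ J, (#S : ℤ) < r₂ (insert x S) + r₁ S) := by
  by_contra! ⟨⟨S, hSJ, hS⟩, ⟨U, hUJ, hU⟩⟩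
  have hIJ : ∀ A ⊆ J, (#A : ℤ) ≤ r₁ A + r₂ A := fun A hA => hI A (hA.trans (subset_insert x J))
  have hxW : x ∉ S ∪ U := fun h => hx (union_subset hSJ hUJ h)
  have hS₁ : r₁ (insert x S) ≤ r₁ S := by linarith [hIJ S hSJ]
  have hU₂ : r₂ (insert x U) ≤ r₂ U := by linarith [hIJ U hUJ]
  have hW : r₁ (S ∪ U) + r₂ (S ∪ U) ≤ #(S ∪ U) := by
    have hcard : (#(S ∪ U) + #(S ∩ U) : ℤ) = #S + #U := by
      exact_mod_cast card_union_add_card_inter S U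
    linarith [hs₁ S U, hs₂ S U, hIJ (S ∩ U) (inter_subset_left.trans hSJ),
      hm₁ (subset_insert x S), hm₂ (subset_insert x U)]
  have hW₁ : r₁ (insert x (S ∪ U)) ≤ r₁ (S ∪ U) := by
    linarith [hs₁.sub_le_sub_of_subset subset_union_left hxW]
  have hW₂ : r₂ (insert x (S ∪ U)) ≤ r₂ (S ∪ U) := by
    linarith [hs₂.sub_le_sub_of_subset subset_union_right hxW]
  have hWx := hI _ (insert_subset_insert x (union_subset hSJ hUJ))
  rw [card_insert_of_notMem hxW, Pi.add_apply] at hWx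
  push_cast at hWx
  linarith

lemma IsMatroidRankFn.rankIndep_of_forall_card_lt (h₁ : IsMatroidRankFn r₁) (h₂ : r₂ ∅ = 0)
    {x : α} {J : Finset α} (h : ∀ S ⊆ J, (#S : ℤ) < r₁ (insert x S) + r₂ S) :
    RankIndep r₁ {x} ∧ RankIndep (contractRank r₁ {x} + r₂) J := by
  have hx_le : r₁ {x} ≤ 1 := by simpa [h₁.empty] using h₁.insert_le x ∅
  have hx_pos : 0 < r₁ {x} := by simpa [h₂] using h ∅ (empty_subset J)
  refine ⟨(rankIndep_singleton_iff h₁.empty).2 hx_pos, fun S hS => ?_⟩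
  have := h S hS
  simp only [Pi.add_apply, contractRank, union_singleton]
  linarith

theorem IsMatroidRankFn.exists_union_eq (h₁ : IsMatroidRankFn r₁) (h₂ : IsMatroidRankFn r₂)
    {I : Finset α} (hI : RankIndep (r₁ + r₂) I) :
    ∃ I₁ I₂, RankIndep r₁ I₁ ∧ RankIndep r₂ I₂ ∧ I = I₁ ∪ I₂ := by
  induction I using Finset.induction_on generalizing r₁ r₂ with
  | empty => exact ⟨∅, ∅, by simp [RankIndep, h₁.empty], by simp [RankIndep, h₂.empty], rfl⟩
  | insert x J hx ih =>
    rcases hI.forall_card_lt_or_forall_card_lt hx h₁.mono h₁.submod h₂.mono h₂.submod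
      with h | h
    · obtain ⟨hx₁, hJ⟩ := h₁.rankIndep_of_forall_card_lt h₂.empty h
      obtain ⟨J₁, J₂, hJ₁, hJ₂, rfl⟩ := ih (h₁.contract {x}) h₂ hJ
      refine ⟨J₁ ∪ {x}, J₂, hJ₁.union_of_contractRank h₁.submod hx₁, hJ₂, ?_⟩
      rw [union_singleton, insert_union]
    · obtain ⟨hx₂, hJ⟩ := h₂.rankIndep_of_forall_card_lt h₁.empty h
      obtain ⟨J₂, J₁, hJ₂, hJ₁, rfl⟩ := ih (h₂.contract {x}) h₁ hJ
      refine ⟨J₁, J₂ ∪ {x}, hJ₁, hJ₂.union_of_contractRank h₂.submod hx₂, ?_⟩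
      rw [union_singleton, union_insert, union_comm]

end Partition

/-- For `f ∅ = 0` this is the rank function of the matroid `M(f)`. -/
def edmondsRank (f : Finset α → ℤ) (S : Finset α) : ℤ :=
  S.powerset.inf' (powerset_nonempty S) fun T => f T + #(S \ T)

section EdmondsRank

variable {f g : Finset α → ℤ}

lemma edmondsRank_le (f : Finset α → ℤ) {S T : Finset α} (hT : T ⊆ S) :
    edmondsRank f S ≤ f T + #(S \ T) :=
  inf'_le _ (mem_powerset.2 hT)

lemma exists_edmondsRank_eq (f : Finset α → ℤ) (S : Finset α) :
    ∃ T ⊆ S, edmondsRank f S = f T + #(S \ T) := by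
  obtain ⟨T, hT, h⟩ := exists_mem_eq_inf' (powerset_nonempty S) fun T => f T + #(S \ T)
  exact ⟨T, mem_powerset.1 hT, h⟩

lemma edmondsRank_mono (hf : Monotone f) : Monotone (edmondsRank f) := by
  intro S S' hSS'
  obtain ⟨T, hT, hrT⟩ := exists_edmondsRank_eq f S'
  have hcard : #(S \ (T ∩ S)) ≤ #(S' \ T) := card_le_card fun a ha => by
    simp only [mem_sdiff, mem_inter] at ha ⊢
    exact ⟨hSS' ha.1, by tauto⟩
  calc edmondsRank f S ≤ f (T ∩ S) + #(S \ (T ∩ S)) := edmondsRank_le f inter_subset_right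
    _ ≤ f T + #(S' \ T) := add_le_add (hf inter_subset_left) (by exact_mod_cast hcard)
    _ = edmondsRank f S' := hrT.symm

lemma card_union_sdiff_add_card_inter_sdiff_le (X Y A B : Finset α) :
    #((X ∪ Y) \ (A ∪ B)) + #((X ∩ Y) \ (A ∩ B)) ≤ #(X \ A) + #(Y \ B) := by
  rw [← card_union_add_card_inter, ← card_union_add_card_inter (X \ A)]
  exact add_le_add
    (card_le_card fun a => by simp only [mem_union, mem_inter, mem_sdiff]; tauto)
    (card_le_card fun a => by simp only [mem_union, mem_inter, mem_sdiff]; tauto)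

lemma edmondsRank_submodular (hf : IsSubmodular f) : IsSubmodular (edmondsRank f) := by
  intro X Y
  obtain ⟨A, hA, hrA⟩ := exists_edmondsRank_eq f X
  obtain ⟨B, hB, hrB⟩ := exists_edmondsRank_eq f Y
  have hU := edmondsRank_le f (union_subset_union hA hB)
  have hI := edmondsRank_le f (inter_subset_inter hA hB)
  have hcard : (#((X ∪ Y) \ (A ∪ B)) + #((X ∩ Y) \ (A ∩ B)) : ℤ) ≤ #(X \ A) + #(Y \ B) := by
    exact_mod_cast card_union_sdiff_add_card_inter_sdiff_le X Y A B
  linarith [hf A B]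

lemma edmondsRank_insert_le (f : Finset α → ℤ) (x : α) (S : Finset α) :
    edmondsRank f (insert x S) ≤ edmondsRank f S + 1 := by
  obtain ⟨T, hT, hrT⟩ := exists_edmondsRank_eq f S
  have hcard : #(insert x S \ T) ≤ #(S \ T) + 1 :=
    (card_le_card (by intro a; simp only [mem_sdiff, mem_insert]; tauto)).trans
      (card_insert_le x (S \ T))
  have hcard' : (#(insert x S \ T) : ℤ) ≤ #(S \ T) + 1 := by exact_mod_cast hcard
  calc edmondsRank f (insert x S) ≤ f T + #(insert x S \ T) :=
        edmondsRank_le f (hT.trans (subset_insert x S))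
    _ ≤ edmondsRank f S + 1 := by rw [hrT]; linarith

lemma isMatroidRankFn_edmondsRank (hf0 : f ∅ = 0) (hf : Monotone f) (hfs : IsSubmodular f) :
    IsMatroidRankFn (edmondsRank f) where
  empty := by simp [edmondsRank, hf0]
  mono := edmondsRank_mono hf
  submod := edmondsRank_submodular hfs
  insert_le := edmondsRank_insert_le f

lemma RankIndep.edmondsIndep_of_edmondsRank {I : Finset α} (h : RankIndep (edmondsRank f) I) :
    EdmondsIndep f I :=
  fun S hS _ => (h S hS).trans (by simpa using edmondsRank_le f (subset_refl S))

lemma EdmondsIndep.rankIndep_edmondsRank_add {I : Finset α} (hI : EdmondsIndep (f + g) I)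
    (hf0 : f ∅ = 0) (hg0 : g ∅ = 0) (hf : Monotone f) (hg : Monotone g) :
    RankIndep (edmondsRank f + edmondsRank g) I := by
  intro S hS
  obtain ⟨T, hTS, hrT⟩ := exists_edmondsRank_eq f S
  obtain ⟨U, hUS, hrU⟩ := exists_edmondsRank_eq g S
  have hcover : #S ≤ #(S \ T) + #(S \ U) + #(T ∩ U) :=
    calc #S ≤ #(S \ T ∪ S \ U ∪ T ∩ U) :=
          card_le_card fun a => by simp only [mem_union, mem_sdiff, mem_inter]; tauto
      _ ≤ #(S \ T) + #(S \ U) + #(T ∩ U) :=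
          (card_union_le _ _).trans (add_le_add (card_union_le _ _) le_rfl)
  have hTU : (#(T ∩ U) : ℤ) ≤ f T + g U :=
    calc (#(T ∩ U) : ℤ) ≤ f (T ∩ U) + g (T ∩ U) :=
          hI.rankIndep (by simp [hf0, hg0]) _ (inter_subset_left.trans (hTS.trans hS))
      _ ≤ f T + g U := add_le_add (hf inter_subset_left) (hg inter_subset_right)
  have hcover' : (#S : ℤ) ≤ #(S \ T) + #(S \ U) + #(T ∩ U) := by exact_mod_cast hcover
  simp only [Pi.add_apply, hrT, hrU]
  linarith

end EdmondsRank

theorem EdmondsIndep.exists_union_of_add {f g : Finset α → ℤ} {I : Finset α}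
    (hI : EdmondsIndep (f + g) I) (hf : Monotone f) (hf0 : 0 ≤ f) (hfs : IsSubmodular f)
    (hg : Monotone g) (hg0 : 0 ≤ g) (hgs : IsSubmodular g) :
    ∃ I₁ I₂, EdmondsIndep f I₁ ∧ EdmondsIndep g I₂ ∧ I = I₁ ∪ I₂ := by
  set f' := Function.update f ∅ 0
  set g' := Function.update g ∅ 0
  have hf' : Monotone f' := monotone_update_empty hf hf0
  have hg' : Monotone g' := monotone_update_empty hg hg0
  have hrf : IsMatroidRankFn (edmondsRank f') :=
    isMatroidRankFn_edmondsRank (Function.update_self _ _ _) hf' (hfs.update_empty (hf0 ∅))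
  have hrg : IsMatroidRankFn (edmondsRank g') :=
    isMatroidRankFn_edmondsRank (Function.update_self _ _ _) hg' (hgs.update_empty (hg0 ∅))
  have hI' : EdmondsIndep (f' + g') I := (edmondsIndep_congr fun S hS => by
    simp [f', g', Function.update_of_ne hS.ne_empty]).1 hI
  obtain ⟨I₁, I₂, h₁, h₂, rfl⟩ := hrf.exists_union_eq hrg
    (hI'.rankIndep_edmondsRank_add (Function.update_self _ _ _) (Function.update_self _ _ _) hf' hg')
  exact ⟨I₁, I₂, (edmondsIndep_update_empty 0).1 h₁.edmondsIndep_of_edmondsRank,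
    (edmondsIndep_update_empty 0).1 h₂.edmondsIndep_of_edmondsRank, rfl⟩

end EdmondsUnion

theorem edmonds_sum_eq_union_general {E : Type*} [DecidableEq E]
    (f g : Finset E → ℤ)
    (hfsub : ∀ S T : Finset E, f (S ∪ T) + f (S ∩ T) ≤ f S + f T)
    (hfmono : ∀ ⦃S T : Finset E⦄, S ⊆ T → f S ≤ f T)
    (hfnonneg : ∀ S : Finset E, 0 ≤ f S)
    (hgsub : ∀ S T : Finset E, g (S ∪ T) + g (S ∩ T) ≤ g S + g T)
    (hgmono : ∀ ⦃S T : Finset E⦄, S ⊆ T → g S ≤ g T)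
    (hgnonneg : ∀ S : Finset E, 0 ≤ g S) :
    ∀ I : Finset E,
      EdmondsIndep (fun S => f S + g S) I ↔
        ∃ I₁ I₂ : Finset E, EdmondsIndep f I₁ ∧ EdmondsIndep g I₂ ∧ I = I₁ ∪ I₂ := fun _ =>
  ⟨fun hI => hI.exists_union_of_add hfmono hfnonneg hfsub hgmono hgnonneg hgsub,
    fun ⟨_, _, h₁, h₂, hI⟩ => hI ▸ h₁.add_union h₂ hfmono hfnonneg hgmono hgnonneg⟩

/-- for submodular, monotone, nonnegative `f, g`, the matroid `M(f+g)`
equals the matroid union `M(f) ∨ M(g)`: `I` is independent for `f + g` iff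
`I = I₁ ∪ I₂` with `I₁` independent for `f` and `I₂` independent for `g`. -/
theorem edmonds_sum_eq_union {E : Type*} [Fintype E] [DecidableEq E]
    (f g : Finset E → ℤ)
    (hfsub : ∀ S T : Finset E, f (S ∪ T) + f (S ∩ T) ≤ f S + f T)
    (hfmono : ∀ ⦃S T : Finset E⦄, S ⊆ T → f S ≤ f T)
    (hfnonneg : ∀ S : Finset E, 0 ≤ f S)
    (hgsub : ∀ S T : Finset E, g (S ∪ T) + g (S ∩ T) ≤ g S + g T)
    (hgmono : ∀ ⦃S T : Finset E⦄, S ⊆ T → g S ≤ g T)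
    (hgnonneg : ∀ S : Finset E, 0 ≤ g S) :
    ∀ I : Finset E,
      EdmondsIndep (fun S => f S + g S) I ↔
        ∃ I₁ I₂ : Finset E, EdmondsIndep f I₁ ∧ EdmondsIndep g I₂ ∧ I = I₁ ∪ I₂ :=
  edmonds_sum_eq_union_general f g hfsub hfmono hfnonneg hgsub hgmono hgnonneg
end

section
/- Let f : 2^E → ℤ be monotone, submodular, and bounded on a set E, let e ∈ E, and define g : 2^{E∖{e}} → ℤ by g(S) = min{f(S), f(S ∪ {e}) − 1}. Then the contraction M(f)/e of Edmonds' matroid M(f) by the element e equals Edmonds' matroid M(g). (Assume e is not a loop of M(f), i.e., f({e}) ≥ 1.) -/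
/-- for monotone, submodular, bounded `f` and a non-loop element `e`,
the contraction `M(f)/e` of Edmonds' matroid (in which `I ⊆ E \ {e}` is independent
iff `I ∪ {e}` is independent in `M(f)`) equals Edmonds' matroid `M(g)` where
`g(S) = min (f S) (f (S ∪ {e}) - 1)`. -/
theorem edmonds_contract {E : Type*} [DecidableEq E] (f : Finset E → ℤ)
    (hmono : ∀ ⦃S T : Finset E⦄, S ⊆ T → f S ≤ f T)
    (hsub : ∀ S T : Finset E, f (S ∪ T) + f (S ∩ T) ≤ f S + f T)
    (hbdd : ∃ N : ℤ, ∀ S : Finset E, f S ≤ N)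
    (e : E) (hloop : 1 ≤ f {e}) :
    ∀ I : Finset E, e ∉ I →
      (EdmondsIndep f (insert e I) ↔
        EdmondsIndep (fun S => min (f S) (f (insert e S) - 1)) I) := by
  intro I heI
  constructor
  · intro h I' hI' hne
    simp only [le_min_iff]
    constructor
    · exact h I' (hI'.trans (Finset.subset_insert e I)) hne
    · have he' : e ∉ I' := fun he' => heI (hI' he')
      have hsub' : insert e I' ⊆ insert e I := Finset.insert_subset_insert e hI'
      have := h (insert e I') hsub' (Finset.insert_nonempty e I')
      rw [Finset.card_insert_of_notMem he'] at this
      push_cast at this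
      linarith
  · intro h J hJ hne
    by_cases heJ : e ∈ J
    · have hJ' : J.erase e ⊆ I := by
        intro x hx
        rcases Finset.mem_erase.mp hx with ⟨hx1, hx2⟩
        rcases Finset.mem_insert.mp (hJ hx2) with h1 | h1
        · exact absurd h1 hx1
        · exact h1
      by_cases hne' : (J.erase e).Nonempty
      · have := h (J.erase e) hJ' hne'
        simp only [le_min_iff] at this
        have heq : insert e (J.erase e) = J := Finset.insert_erase heJ
        rw [heq] at this
        have hc : (J.erase e).card = J.card - 1 := Finset.card_erase_of_mem heJ
        have hcard : 1 ≤ J.card := Finset.card_pos.mpr hne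
        have : ((J.card : ℤ) - 1) ≤ f J - 1 := by
          have := this.2
          rw [hc] at this
          push_cast [hcard] at this
          linarith
        linarith
      · have : J = {e} := by
          rw [Finset.not_nonempty_iff_eq_empty] at hne'
          ext x
          simp only [Finset.mem_singleton]
          constructor
          · intro hx
            by_contra hxe
            exact Finset.notMem_empty x (hne' ▸ Finset.mem_erase.mpr ⟨hxe, hx⟩)
          · rintro rfl; exact heJ
        rw [this]
        simpa using hloop
    · have hJI : J ⊆ I := fun x hx => by
        rcases Finset.mem_insert.mp (hJ hx) with h1 | h1
        · exact absurd (h1 ▸ hx) heJ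
        · exact h1
      have := h J hJI hne
      simp only [le_min_iff] at this
      exact this.1
end
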